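/- If a finite simple graph G has an edge clique cover of size cc ≥ 1, then the number of minimal separators of G is at most 2^{cc−1}. -/

import Mathlib

open scoped Classical

namespace PaperECC

variable {V : Type*}

/-- `nbhd G X` is N(X): vertices outside `X` with a neighbor in `X`. -/
def nbhd (G : SimpleGraph V) (X : Set V) : Set V :=
  {v | v ∉ X ∧ ∃ u ∈ X, G.Adj u v}

/-- `closedNbhd G X` is N[X] = X ∪ N(X). -/
def closedNbhd (G : SimpleGraph V) (X : Set V) : Set V :=
  X ∪ nbhd G X

/-- closed neighborhood N[v] of a single vertex. -/
def vNbhd (G : SimpleGraph V) (v : V) : Set V :=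
  insert v (G.neighborSet v)

/-- `IsCompOf G X C`: `C` is the vertex set of a connected component of `G \ X`. -/
def IsCompOf (G : SimpleGraph V) (X C : Set V) : Prop :=
  C.Nonempty ∧ Disjoint C X ∧ (G.induce C).Connected ∧
    ∀ u ∈ C, ∀ v, v ∉ X → G.Adj u v → v ∈ C

/-- `C` is a full component of `X`: a component of `G \ X` with N(C) = X. -/
def IsFullCompOf (G : SimpleGraph V) (X C : Set V) : Prop :=
  IsCompOf G X C ∧ nbhd G C = X

/-- `S` is a minimal separator of `G`: it has at least two full components. -/
def IsMinSep (G : SimpleGraph V) (S : Set V) : Prop :=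
  ∃ C D : Set V, C ≠ D ∧ IsFullCompOf G S C ∧ IsFullCompOf G S D

/-- `C` is a block of `G`: a component of `G \ N(C)` whose neighborhood is a minimal separator. -/
def IsBlock (G : SimpleGraph V) (C : Set V) : Prop :=
  IsCompOf G (nbhd G C) C ∧ IsMinSep G (nbhd G C)

/-- `H` is chordal: every (injectively embedded) cycle on at least 4 vertices has a chord,
i.e. there is no induced cycle on four or more vertices. -/
def IsChordal (H : SimpleGraph V) : Prop :=
  ∀ n : ℕ, 4 ≤ n → ∀ f : ZMod n → V, Function.Injective f →
    (∀ i, H.Adj (f i) (f (i + 1))) →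
    ∃ i j : ZMod n, i ≠ j ∧ j ≠ i + 1 ∧ i ≠ j + 1 ∧ H.Adj (f i) (f j)

/-- `H` is a triangulation of `G` (on the same vertex set). -/
def IsTri (G H : SimpleGraph V) : Prop :=
  IsChordal H ∧ G ≤ H

/-- `H` is a minimal triangulation of `G`. -/
def IsMinTri (G H : SimpleGraph V) : Prop :=
  IsTri G H ∧ ∀ H' : SimpleGraph V, IsTri G H' → H' ≤ H → H' = H

/-- `Ω` is a maximal clique of `H`. -/
def IsMaxClique (H : SimpleGraph V) (Ω : Set V) : Prop :=
  H.IsClique Ω ∧ ∀ Ω' : Set V, H.IsClique Ω' → Ω ⊆ Ω' → Ω' = Ω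

/-- `Ω` is a potential maximal clique of `G`: a maximal clique of some minimal triangulation. -/
def IsPMC (G : SimpleGraph V) (Ω : Set V) : Prop :=
  ∃ H : SimpleGraph V, IsMinTri G H ∧ IsMaxClique H Ω

/-- `W` is an edge clique cover of `G`: a finite collection of cliques covering all edges. -/
def IsECC (G : SimpleGraph V) (W : Finset (Set V)) : Prop :=
  (∀ K ∈ W, G.IsClique K) ∧ ∀ u v : V, G.Adj u v → ∃ K ∈ W, u ∈ K ∧ v ∈ K

/-- `W[X]`: the cliques of `W` intersecting the vertex set `X`. -/
noncomputable def meeting (W : Finset (Set V)) (X : Set V) : Finset (Set V) :=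
  W.filter (fun K => (K ∩ X).Nonempty)

/-- `V(G, W')`: the vertices all of whose cliques (within `W`) belong to `W'`. -/
def partVerts (W W' : Finset (Set V)) : Set V :=
  {v | ∀ K ∈ W, v ∈ K → K ∈ W'}

/-- The connected components of the subgraph of `G` induced on a vertex set `Y`. -/
def compsOf (G : SimpleGraph V) (Y : Set V) : Set (Set V) :=
  {C | IsCompOf G Yᶜ C}

/-- `C(W')`: the components of the part `W'` of the edge clique cover `W`. -/
def partComps (G : SimpleGraph V) (W W' : Finset (Set V)) : Set (Set V) :=
  compsOf G (partVerts W W')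

/-- `W'` is a good part of `W`: a nonempty subset all of whose components are blocks of `G`. -/
def IsGoodPart (G : SimpleGraph V) (W W' : Finset (Set V)) : Prop :=
  W' ⊆ W ∧ W'.Nonempty ∧ ∀ C ∈ partComps G W W', IsBlock G C

/-- The realization `R(C)` of a block `C`, as a graph supported on `N[C]`:
edges of `G[N[C]]` together with all pairs inside `N(C)`. -/
def realization (G : SimpleGraph V) (C : Set V) : SimpleGraph V where
  Adj u v := u ≠ v ∧ u ∈ closedNbhd G C ∧ v ∈ closedNbhd G C ∧
    (G.Adj u v ∨ (u ∈ nbhd G C ∧ v ∈ nbhd G C))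
  symm := by
    refine ⟨?_⟩
    intro u v h
    exact ⟨h.1.symm, h.2.2.1, h.2.1, h.2.2.2.elim (fun a => Or.inl a.symm)
      (fun a => Or.inr ⟨a.2, a.1⟩)⟩
  loopless := ⟨fun u h => h.1 rfl⟩

/-- The complete graph on the vertex set `Ω` (supported on `Ω`): all pairs inside `Ω`. -/
def cliqueOn (Ω : Set V) : SimpleGraph V where
  Adj u v := u ≠ v ∧ u ∈ Ω ∧ v ∈ Ω
  symm := ⟨fun u v h => ⟨h.1.symm, h.2.2, h.2.1⟩⟩
  loopless := ⟨fun u h => h.1 rfl⟩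

/-- The induced subgraph `G[A]`, as a graph supported on `A`. -/
def inducedOn (G : SimpleGraph V) (A : Set V) : SimpleGraph V where
  Adj u v := G.Adj u v ∧ u ∈ A ∧ v ∈ A
  symm := ⟨fun u v h => ⟨h.1.symm, h.2.2, h.2.1⟩⟩
  loopless := ⟨fun u h => G.irrefl h.1⟩

/-- All edges of `H` lie inside the vertex set `A` (i.e. `H` has vertex set `A`). -/
def edgesWithin (H : SimpleGraph V) (A : Set V) : Prop :=
  ∀ u v : V, H.Adj u v → u ∈ A ∧ v ∈ A

/-- `H` is a triangulation of the graph `G'` with vertex set `A`. -/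
def IsTriOn (G' : SimpleGraph V) (A : Set V) (H : SimpleGraph V) : Prop :=
  IsChordal H ∧ G' ≤ H ∧ edgesWithin H A

/-- `H` is a minimal triangulation of the graph `G'` with vertex set `A`. -/
def IsMinTriOn (G' : SimpleGraph V) (A : Set V) (H : SimpleGraph V) : Prop :=
  IsTriOn G' A H ∧ ∀ H' : SimpleGraph V, IsTriOn G' A H' → H' ≤ H → H' = H

/-- `M` is a module of `G`. -/
def IsModule (G : SimpleGraph V) (M : Set V) : Prop :=
  ∀ v ∉ M, (∀ u ∈ M, G.Adj v u) ∨ (∀ u ∈ M, ¬ G.Adj v u)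

/-- If two components of `G \ X` share a vertex, then one is contained in the other. -/
lemma comp_subset_comp {G : SimpleGraph V} {X C D : Set V}
    (hC : IsCompOf G X C) (hD : IsCompOf G X D) {u : V} (huC : u ∈ C) (huD : u ∈ D) :
    C ⊆ D := by
  obtain ⟨-, hCX, hconn, -⟩ := hC
  obtain ⟨-, -, -, hclose⟩ := hD
  intro w hw
  have key : ∀ {a b : ↥C}, (G.induce C).Walk a b → (a : V) ∈ D → (b : V) ∈ D := by
    intro a b p
    induction p with
    | nil => exact id
    | @cons x y z h p ih =>
      intro hx
      exact ih (hclose _ hx _ (fun hXmem => Set.disjoint_left.mp hCX y.2 hXmem) h)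
  obtain ⟨p⟩ := hconn.preconnected ⟨u, huC⟩ ⟨w, hw⟩
  exact key p huD

/-- Two components of `G \ X` that intersect are equal. -/
lemma comp_eq_of_inter {G : SimpleGraph V} {X C D : Set V}
    (hC : IsCompOf G X C) (hD : IsCompOf G X D) (h : (C ∩ D).Nonempty) : C = D := by
  obtain ⟨u, huC, huD⟩ := h
  exact Set.Subset.antisymm (comp_subset_comp hC hD huC huD) (comp_subset_comp hD hC huD huC)

/-- A clique cannot meet two distinct components of `G \ S`. -/
lemma clique_inter_eq_empty {G : SimpleGraph V} {S C D K : Set V}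
    (hC : IsCompOf G S C) (hD : IsCompOf G S D) (hCD : C ≠ D)
    (hK : G.IsClique K) (h1 : (K ∩ C).Nonempty) : ¬ (K ∩ D).Nonempty := by
  rintro ⟨v, hvK, hvD⟩
  obtain ⟨u, huK, huC⟩ := h1
  have hne : u ≠ v := fun h => hCD (comp_eq_of_inter hC hD ⟨u, huC, h ▸ hvD⟩)
  have hadj : G.Adj u v := hK huK hvK hne
  have hvS : v ∉ S := fun h => Set.disjoint_left.mp hD.2.1 hvD h
  have hvC : v ∈ C := hC.2.2.2 u huC v hvS hadj
  exact hCD (comp_eq_of_inter hC hD ⟨v, hvC, hvD⟩)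

/-- The separator `S` can be recovered from the set of cover cliques meeting a full
component `C` of `S`: it consists of the vertices lying both in a clique meeting `C`
and in a clique not meeting `C`. -/
lemma recover_eq {G : SimpleGraph V} {W : Finset (Set V)} (hW : IsECC G W)
    {S C D : Set V} (hCD : C ≠ D) (hC : IsFullCompOf G S C) (hD : IsFullCompOf G S D) :
    {v | (∃ K ∈ meeting W C, v ∈ K) ∧ ∃ K ∈ W, K ∉ meeting W C ∧ v ∈ K} = S := by
  ext v
  simp only [Set.mem_setOf_eq]
  constructor
  · rintro ⟨⟨K, hKm, hvK⟩, K'', hK''W, hK''nm, hvK''⟩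
    rw [meeting, Finset.mem_filter] at hKm hK''nm
    by_contra hvS
    by_cases hvC : v ∈ C
    · exact hK''nm ⟨hK''W, ⟨v, hvK'', hvC⟩⟩
    · obtain ⟨w, hwK, hwC⟩ := hKm.2
      have hne : w ≠ v := fun h => hvC (h ▸ hwC)
      exact hvC (hC.1.2.2.2 w hwC v hvS (hW.1 K hKm.1 hwK hvK hne))
  · intro hvS
    have h1 : v ∈ nbhd G C := by rw [hC.2]; exact hvS
    have h2 : v ∈ nbhd G D := by rw [hD.2]; exact hvS
    obtain ⟨hvC, u, huC, hadj⟩ := h1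
    obtain ⟨hvD, d, hdD, hadj'⟩ := h2
    obtain ⟨K, hKW, huK, hvK⟩ := hW.2 u v hadj
    obtain ⟨K'', hK''W, hdK'', hvK''⟩ := hW.2 d v hadj'
    refine ⟨⟨K, ?_, hvK⟩, K'', hK''W, ?_, hvK''⟩
    · rw [meeting, Finset.mem_filter]
      exact ⟨hKW, u, huK, huC⟩
    · rw [meeting, Finset.mem_filter]
      rintro ⟨-, hmeet⟩
      exact clique_inter_eq_empty hC.1 hD.1 hCD (hW.1 K'' hK''W) hmeet ⟨d, hdK'', hdD⟩

/-- If a finite simple graph `G` has an edge clique cover of size `cc ≥ 1`,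
then the number of minimal separators of `G` is at most `2 ^ (cc - 1)`. -/
theorem num_minimal_separators_le' {V : Type*} [Fintype V] (G : SimpleGraph V)
    (cc : ℕ) (hcc : 1 ≤ cc) (W : Finset (Set V)) (hW : IsECC G W) (hcard : W.card = cc) :
    {S : Set V | IsMinSep G S}.ncard ≤ 2 ^ (cc - 1) := by
  classical
  obtain ⟨K₀, hK₀⟩ : W.Nonempty := Finset.card_pos.mp (by omega)
  -- for each minimal separator, choose a full component avoiding `K₀`
  have key : ∀ S : Set V, IsMinSep G S →
      ∃ C : Set V, IsFullCompOf G S C ∧ (∃ D : Set V, C ≠ D ∧ IsFullCompOf G S D) ∧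
        ¬ (K₀ ∩ C).Nonempty := by
    intro S hS
    obtain ⟨C, D, hCD, hC, hD⟩ := hS
    by_cases h : (K₀ ∩ C).Nonempty
    · exact ⟨D, hD, ⟨C, hCD.symm, hC⟩,
        clique_inter_eq_empty hC.1 hD.1 hCD (hW.1 K₀ hK₀) h⟩
    · exact ⟨C, hC, ⟨D, hCD, hD⟩, h⟩
  set f : Set V → Finset (Set V) := fun S =>
    if h : IsMinSep G S then meeting W (key S h).choose else ∅ with hf
  have hmaps : ∀ S ∈ {S : Set V | IsMinSep G S},
      f S ∈ (((W.erase K₀).powerset : Finset (Finset (Set V))) : Set (Finset (Set V))) := by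
    intro S hS
    simp only [Set.mem_setOf_eq] at hS
    obtain ⟨hfull, hother, hK₀C⟩ := (key S hS).choose_spec
    simp only [hf, dif_pos hS, Finset.coe_powerset, Set.mem_preimage,
      Set.mem_powerset_iff, Finset.coe_subset]
    intro K hK
    rw [meeting, Finset.mem_filter] at hK
    refine Finset.mem_erase.mpr ⟨?_, hK.1⟩
    rintro rfl
    exact hK₀C hK.2
  have hinj : Set.InjOn f {S : Set V | IsMinSep G S} := by
    intro S₁ h₁ S₂ h₂ heq
    simp only [Set.mem_setOf_eq] at h₁ h₂
    obtain ⟨hfull₁, ⟨D₁, hne₁, hD₁⟩, -⟩ := (key S₁ h₁).choose_spec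
    obtain ⟨hfull₂, ⟨D₂, hne₂, hD₂⟩, -⟩ := (key S₂ h₂).choose_spec
    simp only [hf, dif_pos h₁, dif_pos h₂] at heq
    calc S₁ = {v | (∃ K ∈ meeting W (key S₁ h₁).choose, v ∈ K) ∧
            ∃ K ∈ W, K ∉ meeting W (key S₁ h₁).choose ∧ v ∈ K} :=
          (recover_eq hW hne₁ hfull₁ hD₁).symm
      _ = {v | (∃ K ∈ meeting W (key S₂ h₂).choose, v ∈ K) ∧
            ∃ K ∈ W, K ∉ meeting W (key S₂ h₂).choose ∧ v ∈ K} := by rw [heq]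
      _ = S₂ := recover_eq hW hne₂ hfull₂ hD₂
  have hle := Set.ncard_le_ncard_of_injOn f hmaps hinj (Finset.finite_toSet _)
  rwa [Set.ncard_coe_finset, Finset.card_powerset, Finset.card_erase_of_mem hK₀, hcard] at hle

end PaperECC
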